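/- Let d ≥ 1, N ≥ 1, and let ρ₀,…,ρ_N be Borel probability measures on ℝ^d with finite second moments. For x = (x₀,…,x_N) ∈ (ℝ^d)^{N+1}, let 𝕍(x) ∈ (ℝ^d)^{N+1} denote the unique minimizer of (v₀,…,v_N) ↦ Σ_{i=0}^{N−1} c(x_i, x_{i+1}, v_i, v_{i+1}). If π̂ minimizes ∫ 𝒞(x₀,…,x_N) dπ over all π ∈ Π(ρ₀,…,ρ_N), then γ̂ := (id, 𝕍)_#π̂, the pushforward of π̂ under the map x ↦ (x, 𝕍(x)), minimizes Σ_{i=0}^{N−1} ∫ c(x_i, x_{i+1}, v_i, v_{i+1}) dγ over all γ ∈ Γ(ρ₀,…,ρ_N). -/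

import Mathlib

open MeasureTheory

noncomputable section

/-- The cost `c(x, x', v, v') = 12‖x'−x−v‖² − 12⟨x'−x−v, v'−v⟩ + 4‖v'−v‖²`. -/
def splineCost {d : ℕ} (x x' v v' : EuclideanSpace ℝ (Fin d)) : ℝ :=
  12 * ‖x' - x - v‖ ^ 2 - 12 * (inner ℝ (x' - x - v) (v' - v) : ℝ) + 4 * ‖v' - v‖ ^ 2

/-- `𝒞(x₀,…,x_N)`: the infimum of `∫₀^N ‖X''‖²` over all C² curves `X` with
`X(i) = x i` for every `i = 0, …, N`. -/
def multiCost {d : ℕ} (N : ℕ) (x : Fin (N + 1) → EuclideanSpace ℝ (Fin d)) : ℝ :=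
  sInf { y : ℝ | ∃ X : ℝ → EuclideanSpace ℝ (Fin d), ContDiff ℝ 2 X ∧
      (∀ i : Fin (N + 1), X ((i : ℕ) : ℝ) = x i) ∧
      y = ∫ t in (0:ℝ)..(N:ℝ), ‖deriv (deriv X) t‖ ^ 2 }

/-!
On each unit interval, among C² curves with prescribed endpoint positions and velocities, the
Hermite cubic minimizes `∫ ‖X''‖²`, and its energy is exactly `c(x, x', v, v')`. Hence
`𝒞(x) ≥ Σ c(xᵢ, xᵢ₊₁, 𝕍(x)ᵢ, 𝕍(x)ᵢ₊₁)`. Conversely, the first-order conditions for `𝕍(x)` say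
that adjacent Hermite pieces have the same second derivative at the shared knot, so they glue to a
C² cubic spline and equality holds. Being the unique minimizer of a quadratic form, `𝕍` is linear,
hence measurable. For `γ ∈ Γ` with position marginal `π`, we get
`∫ c dγ ≥ ∫ 𝒞 dπ ≥ ∫ 𝒞 dπ̂ = ∫ c dγ̂`.
-/

open scoped RealInnerProductSpace
open Finset intervalIntegral

section Hermite

variable {d : ℕ}

/-- The cubic `p` on `[0, 1]` with `p 0 = x`, `p 1 = x'`, `p' 0 = v`, `p' 1 = v'` has
`p'' s = hermiteAccel x x' v v' + s • hermiteJerk x x' v v'`. -/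
def hermiteAccel (x x' v v' : EuclideanSpace ℝ (Fin d)) : EuclideanSpace ℝ (Fin d) :=
  (6:ℝ) • (x' - x) - (4:ℝ) • v - (2:ℝ) • v'

def hermiteJerk (x x' v v' : EuclideanSpace ℝ (Fin d)) : EuclideanSpace ℝ (Fin d) :=
  (6:ℝ) • (v + v') - (12:ℝ) • (x' - x)

variable (x x' v v' : EuclideanSpace ℝ (Fin d))

lemma splineCost_eq_accel_jerk :
    splineCost x x' v v' = ‖hermiteAccel x x' v v'‖ ^ 2 +
      ⟪hermiteAccel x x' v v', hermiteJerk x x' v v'⟫ + ‖hermiteJerk x x' v v'‖ ^ 2 / 3 := by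
  simp only [splineCost, hermiteAccel, hermiteJerk, ← real_inner_self_eq_norm_sq,
    inner_sub_left, inner_sub_right, inner_add_left, inner_add_right, real_inner_smul_left,
    real_inner_smul_right]
  linarith [real_inner_comm x x', real_inner_comm x v, real_inner_comm x v',
    real_inner_comm x' v, real_inner_comm x' v', real_inner_comm v v']

lemma splineCost_eq_boundary_terms :
    splineCost x x' v v' = ⟪hermiteAccel x x' v v' + hermiteJerk x x' v v', v'⟫ -
      ⟪hermiteAccel x x' v v', v⟫ - ⟪hermiteJerk x x' v v', x' - x⟫ := by
  simp only [splineCost, hermiteAccel, hermiteJerk, ← real_inner_self_eq_norm_sq,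
    inner_sub_left, inner_sub_right, inner_add_left, real_inner_smul_left]
  linarith [real_inner_comm x x', real_inner_comm x v, real_inner_comm x v',
    real_inner_comm x' v, real_inner_comm x' v', real_inner_comm v v']

lemma splineCost_add_velocity (a a' : EuclideanSpace ℝ (Fin d)) :
    splineCost x x' (v + a) (v' + a') = splineCost x x' v v' +
      2 * (⟪hermiteAccel x x' v v' + hermiteJerk x x' v v', a'⟫ - ⟪hermiteAccel x x' v v', a⟫) +
      splineCost 0 0 a a' := by
  simp only [splineCost, hermiteAccel, hermiteJerk, ← real_inner_self_eq_norm_sq,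
    inner_sub_left, inner_sub_right, inner_add_left, inner_add_right, real_inner_smul_left,
    inner_zero_left, inner_zero_right, sub_zero]
  linarith [real_inner_comm x x', real_inner_comm x v, real_inner_comm x v',
    real_inner_comm x' v, real_inner_comm x' v', real_inner_comm v v',
    real_inner_comm x a, real_inner_comm x a', real_inner_comm x' a, real_inner_comm x' a',
    real_inner_comm v a, real_inner_comm v a', real_inner_comm v' a, real_inner_comm v' a',
    real_inner_comm a a']

lemma hermite_endpoint_position :
    x' = x + v + (1 / 2 : ℝ) • hermiteAccel x x' v v' + (1 / 6 : ℝ) • hermiteJerk x x' v v' := by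
  simp only [hermiteAccel, hermiteJerk]; module

lemma hermite_endpoint_velocity :
    v' = v + hermiteAccel x x' v v' + (1 / 2 : ℝ) • hermiteJerk x x' v v' := by
  simp only [hermiteAccel, hermiteJerk]; module

end Hermite

section Calculus

variable {F : Type*} [NormedAddCommGroup F] [InnerProductSpace ℝ F]

lemma ContDiff.hasDerivAt_deriv {X : ℝ → F} (hX : ContDiff ℝ 2 X) (t : ℝ) :
    HasDerivAt X (deriv X t) t :=
  ((hX.differentiable (by norm_num)) t).hasDerivAt

lemma ContDiff.hasDerivAt_deriv_deriv {X : ℝ → F} (hX : ContDiff ℝ 2 X) (t : ℝ) :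
    HasDerivAt (deriv X) (deriv (deriv X) t) t := by
  have h : ContDiff ℝ (1 + 1) X := hX
  exact (((contDiff_succ_iff_deriv.mp h).2.2.differentiable one_ne_zero) t).hasDerivAt

lemma ContDiff.continuous_deriv_deriv {X : ℝ → F} (hX : ContDiff ℝ 2 X) :
    Continuous (deriv (deriv X)) := by
  have h : ContDiff ℝ (1 + 1) X := hX
  exact (contDiff_succ_iff_deriv.mp h).2.2.continuous_deriv le_rfl

lemma contDiff_two_of_hasDerivAt {X X' X'' : ℝ → F} (hX : ∀ t, HasDerivAt X (X' t) t)
    (hX' : ∀ t, HasDerivAt X' (X'' t) t) (hX'' : Continuous X'') : ContDiff ℝ 2 X := by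
  have hderiv : deriv X = X' := funext fun t => (hX t).deriv
  have hderiv' : deriv X' = X'' := funext fun t => (hX' t).deriv
  change ContDiff ℝ (1 + 1) X
  refine contDiff_succ_iff_deriv.mpr ⟨fun t => (hX t).differentiableAt, by simp, ?_⟩
  rw [hderiv, contDiff_one_iff_deriv, hderiv']
  exact ⟨fun t => (hX' t).differentiableAt, hX''⟩

lemma integral_inner_affine_deriv_deriv {X : ℝ → F} (hX : ContDiff ℝ 2 X) (α β : F) (a b : ℝ) :
    ∫ t in a..b, ⟪α + (t - a) • β, deriv (deriv X) t⟫ =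
      ⟪α + (b - a) • β, deriv X b⟫ - ⟪α, deriv X a⟫ - ⟪β, X b - X a⟫ := by
  have hg : ∀ t, HasDerivAt (fun t => α + (t - a) • β) β t := fun t => by
    simpa using (((hasDerivAt_id t).sub_const a).smul_const β).const_add α
  have hH : ∀ t, HasDerivAt (fun t => ⟪α + (t - a) • β, deriv X t⟫ - ⟪β, X t⟫)
      ⟪α + (t - a) • β, deriv (deriv X) t⟫ t := fun t => by
    refine (((hg t).inner ℝ (hX.hasDerivAt_deriv_deriv t)).sub
      ((hasDerivAt_const t β).inner ℝ (hX.hasDerivAt_deriv t))).congr_deriv ?_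
    simp
  rw [integral_eq_sub_of_hasDerivAt (fun t _ => hH t)]
  · simp only [sub_self, zero_smul, add_zero, inner_sub_right]
    ring
  · exact (Continuous.inner (by fun_prop) hX.continuous_deriv_deriv).intervalIntegrable _ _

lemma integral_norm_sq_affine (α β : F) (a : ℝ) :
    ∫ t in a..a + 1, ‖α + (t - a) • β‖ ^ 2 = ‖α‖ ^ 2 + ⟪α, β⟫ + ‖β‖ ^ 2 / 3 := by
  have hG : ∀ t, HasDerivAt
      (fun t => ‖α‖ ^ 2 * (t - a) + ⟪α, β⟫ * (t - a) ^ 2 + ‖β‖ ^ 2 / 3 * (t - a) ^ 3)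
      (‖α + (t - a) • β‖ ^ 2) t := fun t => by
    have hs : HasDerivAt (fun t : ℝ => t - a) 1 t := (hasDerivAt_id t).sub_const a
    refine (((hs.const_mul _).add ((hs.pow 2).const_mul _)).add
      ((hs.pow 3).const_mul _)).congr_deriv ?_
    rw [norm_add_sq_real, norm_smul, real_inner_smul_right, Real.norm_eq_abs, mul_pow, sq_abs]
    push_cast
    ring
  rw [integral_eq_sub_of_hasDerivAt (fun t _ => hG t)
    ((by fun_prop : Continuous _).intervalIntegrable _ _)]
  ring

lemma sum_integral_unit_intervals {f : ℝ → ℝ} (hf : Continuous f) (N : ℕ) :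
    ∑ n ∈ range N, ∫ t in (n : ℝ)..n + 1, f t = ∫ t in (0 : ℝ)..N, f t := by
  simpa using intervalIntegral.sum_integral_adjacent_intervals (a := fun n : ℕ => (n : ℝ))
    (fun k _ => hf.intervalIntegrable _ _) (n := N)

lemma hasDerivAt_max_zero_pow {n : ℕ} (hn : n ≠ 0) (s : ℝ) :
    HasDerivAt (fun s : ℝ => max s 0 ^ (n + 1)) ((n + 1) * max s 0 ^ n) s := by
  have hoff : ∀ y ≠ (0 : ℝ),
      HasDerivAt (fun s : ℝ => max s 0 ^ (n + 1)) ((n + 1) * max y 0 ^ n) y := by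
    intro y hy
    rcases hy.lt_or_gt with hy | hy
    · have hzero : (fun s : ℝ => max s 0 ^ (n + 1)) =ᶠ[nhds y] fun _ => 0 := by
        filter_upwards [eventually_lt_nhds hy] with s hs
        simp [max_eq_right hs.le]
      simpa [max_eq_right hy.le, hn] using (hasDerivAt_const y (0 : ℝ)).congr_of_eventuallyEq hzero
    · have hpow : (fun s : ℝ => max s 0 ^ (n + 1)) =ᶠ[nhds y] fun s => s ^ (n + 1) := by
        filter_upwards [eventually_gt_nhds hy] with s hs
        simp [max_eq_left hs.le]
      simpa [max_eq_left hy.le] using (hasDerivAt_pow (n + 1) y).congr_of_eventuallyEq hpow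
  rcases eq_or_ne s 0 with rfl | hs
  · exact hasDerivAt_of_hasDerivAt_of_ne hoff (by fun_prop) (by fun_prop)
  · exact hoff s hs

end Calculus

section LowerBound

variable {d : ℕ}

/-- The Hermite cubic with the boundary data of `X` has second derivative `g t = α + (t - a) • β`;
integrating by parts, `∫ ⟪g, X''⟫` and `∫ ‖g‖²` both equal the cost, and `‖X'' - g‖² ≥ 0`. -/
lemma splineCost_le_integral {X : ℝ → EuclideanSpace ℝ (Fin d)} (hX : ContDiff ℝ 2 X) (a : ℝ) :
    splineCost (X a) (X (a + 1)) (deriv X a) (deriv X (a + 1)) ≤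
      ∫ t in a..a + 1, ‖deriv (deriv X) t‖ ^ 2 := by
  set α := hermiteAccel (X a) (X (a + 1)) (deriv X a) (deriv X (a + 1))
  set β := hermiteJerk (X a) (X (a + 1)) (deriv X a) (deriv X (a + 1))
  have hW : Continuous (deriv (deriv X)) := hX.continuous_deriv_deriv
  have hpt : ∀ t, 2 * ⟪α + (t - a) • β, deriv (deriv X) t⟫ - ‖α + (t - a) • β‖ ^ 2 ≤
      ‖deriv (deriv X) t‖ ^ 2 := fun t => by
    nlinarith [norm_sub_sq_real (deriv (deriv X) t) (α + (t - a) • β),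
      real_inner_comm (deriv (deriv X) t) (α + (t - a) • β)]
  have hi₁ : IntervalIntegrable (fun t => 2 * ⟪α + (t - a) • β, deriv (deriv X) t⟫) volume a
      (a + 1) := (continuous_const.mul (Continuous.inner (by fun_prop) hW)).intervalIntegrable _ _
  have hi₂ : IntervalIntegrable (fun t => ‖α + (t - a) • β‖ ^ 2) volume a (a + 1) :=
    (Continuous.pow (by fun_prop) 2).intervalIntegrable _ _
  calc splineCost (X a) (X (a + 1)) (deriv X a) (deriv X (a + 1))
      = 2 * (∫ t in a..a + 1, ⟪α + (t - a) • β, deriv (deriv X) t⟫) -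
          ∫ t in a..a + 1, ‖α + (t - a) • β‖ ^ 2 := by
        rw [integral_inner_affine_deriv_deriv hX α β a (a + 1), integral_norm_sq_affine,
          add_sub_cancel_left, one_smul, ← splineCost_eq_accel_jerk,
          ← splineCost_eq_boundary_terms]
        ring
    _ = ∫ t in a..a + 1, (2 * ⟪α + (t - a) • β, deriv (deriv X) t⟫ - ‖α + (t - a) • β‖ ^ 2) := by
        rw [intervalIntegral.integral_sub hi₁ hi₂, intervalIntegral.integral_const_mul]
    _ ≤ ∫ t in a..a + 1, ‖deriv (deriv X) t‖ ^ 2 :=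
        integral_mono_on (by linarith) (hi₁.sub hi₂) ((hW.norm.pow 2).intervalIntegrable _ _)
          fun t _ => hpt t

lemma sum_splineCost_le_integral {X : ℝ → EuclideanSpace ℝ (Fin d)} (hX : ContDiff ℝ 2 X)
    (N : ℕ) :
    ∑ n ∈ range N, splineCost (X n) (X (n + 1)) (deriv X n) (deriv X (n + 1)) ≤
      ∫ t in (0 : ℝ)..N, ‖deriv (deriv X) t‖ ^ 2 := by
  rw [← sum_integral_unit_intervals (f := fun t => ‖deriv (deriv X) t‖ ^ 2)
    (hX.continuous_deriv_deriv.norm.pow 2)]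
  exact sum_le_sum fun n _ => splineCost_le_integral hX n

end LowerBound

section Spline

variable {d : ℕ} (x v : ℕ → EuclideanSpace ℝ (Fin d))

def segmentAccel (n : ℕ) : EuclideanSpace ℝ (Fin d) :=
  hermiteAccel (x n) (x (n + 1)) (v n) (v (n + 1))

def segmentJerk (n : ℕ) : EuclideanSpace ℝ (Fin d) :=
  hermiteJerk (x n) (x (n + 1)) (v n) (v (n + 1))

lemma segment_position (n : ℕ) :
    x (n + 1) = x n + v n + (1 / 2 : ℝ) • segmentAccel x v n + (1 / 6 : ℝ) • segmentJerk x v n :=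
  hermite_endpoint_position _ _ _ _

lemma segment_velocity (n : ℕ) :
    v (n + 1) = v n + segmentAccel x v n + (1 / 2 : ℝ) • segmentJerk x v n :=
  hermite_endpoint_velocity _ _ _ _

/-- Truncated power form: a cubic polynomial plus a jump of the third derivative at each knot
`j + 1`. It interpolates the Hermite data only under `AccelMatchesAtKnots x v N`. -/
def cubicSpline (N : ℕ) (t : ℝ) : EuclideanSpace ℝ (Fin d) :=
  x 0 + t • v 0 + (t ^ 2 / 2) • segmentAccel x v 0 + (t ^ 3 / 6) • segmentJerk x v 0 +
    (6 : ℝ)⁻¹ • ∑ j ∈ range N,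
      max (t - (j + 1)) 0 ^ 3 • (segmentJerk x v (j + 1) - segmentJerk x v j)

def cubicSplineAccel (N : ℕ) (t : ℝ) : EuclideanSpace ℝ (Fin d) :=
  segmentAccel x v 0 + t • segmentJerk x v 0 +
    ∑ j ∈ range N, max (t - (j + 1)) 0 • (segmentJerk x v (j + 1) - segmentJerk x v j)

variable (N : ℕ)

lemma exists_hasDerivAt_cubicSpline :
    ∃ S' : ℝ → EuclideanSpace ℝ (Fin d), (∀ t, HasDerivAt (cubicSpline x v N) (S' t) t) ∧
      ∀ t, HasDerivAt S' (cubicSplineAccel x v N t) t := by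
  set Δ := fun j : ℕ => segmentJerk x v (j + 1) - segmentJerk x v j
  have hshift : ∀ (j : ℕ) (t : ℝ), HasDerivAt (fun t : ℝ => t - (j + 1)) 1 t := fun j t =>
    (hasDerivAt_id t).sub_const _
  refine ⟨fun t => v 0 + t • segmentAccel x v 0 + (t ^ 2 / 2) • segmentJerk x v 0 +
    (2 : ℝ)⁻¹ • ∑ j ∈ range N, max (t - (j + 1)) 0 ^ 2 • Δ j, fun t => ?_, fun t => ?_⟩
  · have hsum : HasDerivAt (fun t : ℝ => ∑ j ∈ range N, max (t - (j + 1)) 0 ^ 3 • Δ j)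
        (∑ j ∈ range N, (3 * max (t - (j + 1)) 0 ^ 2) • Δ j) t :=
      HasDerivAt.fun_sum fun j _ =>
        (((hasDerivAt_max_zero_pow two_ne_zero _).comp t (hshift j t)).smul_const (Δ j)).congr_deriv
          (by congr 1; push_cast; ring)
    have hpoly := (((((hasDerivAt_id t).smul_const (v 0)).const_add (x 0)).add
      (((hasDerivAt_pow 2 t).div_const 2).smul_const (segmentAccel x v 0))).add
      (((hasDerivAt_pow 3 t).div_const 6).smul_const (segmentJerk x v 0)))
    refine (hpoly.add (hsum.const_smul (6 : ℝ)⁻¹)).congr_deriv ?_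
    simp only [smul_sum, smul_smul]
    congr 1
    · push_cast
      module
    · exact sum_congr rfl fun j _ => by congr 1; ring
  · have hsum : HasDerivAt (fun t : ℝ => ∑ j ∈ range N, max (t - (j + 1)) 0 ^ 2 • Δ j)
        (∑ j ∈ range N, (2 * max (t - (j + 1)) 0) • Δ j) t :=
      HasDerivAt.fun_sum fun j _ =>
        (((hasDerivAt_max_zero_pow one_ne_zero _).comp t (hshift j t)).smul_const (Δ j)).congr_deriv
          (by congr 1; push_cast; ring)
    have hpoly := ((((hasDerivAt_id t).smul_const (segmentAccel x v 0)).const_add (v 0)).add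
      (((hasDerivAt_pow 2 t).div_const 2).smul_const (segmentJerk x v 0)))
    refine (hpoly.add (hsum.const_smul (2 : ℝ)⁻¹)).congr_deriv ?_
    simp only [cubicSplineAccel, smul_sum, smul_smul]
    congr 1
    · push_cast
      module
    · exact sum_congr rfl fun j _ => by congr 1; ring

lemma sum_range_max_pow_smul {F : Type*} [AddCommGroup F] [Module ℝ F] {k i : ℕ} (hk : k ≠ 0)
    (hiN : i ≤ N) {t : ℝ} (ht : t ∈ Set.Icc (i : ℝ) (i + 1)) (c : ℕ → F) :
    ∑ j ∈ range N, max (t - (j + 1)) 0 ^ k • c j = ∑ j ∈ range i, (t - (j + 1)) ^ k • c j := by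
  rw [← sum_range_add_sum_Ico _ hiN, sum_eq_zero (s := Ico i N), add_zero]
  · refine sum_congr rfl fun j hj => ?_
    have : (j : ℝ) + 1 ≤ i := by exact_mod_cast mem_range.mp hj
    rw [max_eq_left (by linarith [ht.1])]
  · intro j hj
    have : (i : ℝ) ≤ j := by exact_mod_cast (mem_Ico.mp hj).1
    rw [max_eq_right (by linarith [ht.2]), zero_pow hk, zero_smul]

variable {x v N}

/-- `segmentAccel x v j + segmentJerk x v j` is the second derivative at the right end of segment
`j`, so this says that adjacent Hermite segments have equal second derivatives at the shared
knot. -/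
def AccelMatchesAtKnots (x v : ℕ → EuclideanSpace ℝ (Fin d)) (N : ℕ) : Prop :=
  ∀ j, j + 1 < N → segmentAccel x v (j + 1) = segmentAccel x v j + segmentJerk x v j

lemma cubicSpline_eq_on_segment (hx : AccelMatchesAtKnots x v N) {i : ℕ} (hi : i < N) {t : ℝ}
    (ht : t ∈ Set.Icc (i : ℝ) (i + 1)) :
    cubicSpline x v N t = x i + (t - i) • v i + ((t - i) ^ 2 / 2) • segmentAccel x v i +
      ((t - i) ^ 3 / 6) • segmentJerk x v i := by
  rw [cubicSpline, sum_range_max_pow_smul N three_ne_zero hi.le ht]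
  clear ht
  induction i with
  | zero => simp
  | succ i ih =>
    rw [sum_range_succ, smul_add, ← add_assoc, ih (by omega), segment_position x v i,
      segment_velocity x v i, hx i hi]
    push_cast
    module

lemma cubicSplineAccel_eq_on_segment (hx : AccelMatchesAtKnots x v N) {i : ℕ} (hi : i < N) {t : ℝ}
    (ht : t ∈ Set.Icc (i : ℝ) (i + 1)) :
    cubicSplineAccel x v N t = segmentAccel x v i + (t - i) • segmentJerk x v i := by
  have htrunc := sum_range_max_pow_smul N one_ne_zero hi.le ht
    (fun j => segmentJerk x v (j + 1) - segmentJerk x v j)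
  simp only [pow_one] at htrunc
  rw [cubicSplineAccel, htrunc]
  clear ht htrunc
  induction i with
  | zero => simp
  | succ i ih =>
    rw [sum_range_succ, ← add_assoc, ih (by omega), hx i hi]
    push_cast
    module

theorem exists_contDiff_spline (hx : AccelMatchesAtKnots x v N) :
    ∃ X : ℝ → EuclideanSpace ℝ (Fin d), ContDiff ℝ 2 X ∧ (∀ n ≤ N, X n = x n) ∧
      ∫ t in (0 : ℝ)..N, ‖deriv (deriv X) t‖ ^ 2 =
        ∑ n ∈ range N, splineCost (x n) (x (n + 1)) (v n) (v (n + 1)) := by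
  obtain ⟨S', hS, hS'⟩ := exists_hasDerivAt_cubicSpline x v N
  have hcont : Continuous (cubicSplineAccel x v N) := by
    unfold cubicSplineAccel
    fun_prop
  have hderiv2 : deriv (deriv (cubicSpline x v N)) = cubicSplineAccel x v N := by
    rw [show deriv (cubicSpline x v N) = S' from funext fun t => (hS t).deriv]
    exact funext fun t => (hS' t).deriv
  refine ⟨cubicSpline x v N, contDiff_two_of_hasDerivAt hS hS' hcont, ?_, ?_⟩
  · rintro (_ | m) hm
    · refine (add_eq_left.mpr ?_).trans (by simp)
      refine smul_eq_zero_of_right _ (sum_eq_zero fun j _ => ?_)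
      rw [max_eq_right (by rw [Nat.cast_zero]; linarith [j.cast_nonneg (α := ℝ)]),
        zero_pow three_ne_zero, zero_smul]
    · rw [cubicSpline_eq_on_segment hx (i := m) (by omega) (by push_cast; constructor <;> linarith),
        segment_position x v m]
      push_cast
      module
  · rw [hderiv2, ← sum_integral_unit_intervals (f := fun t => ‖cubicSplineAccel x v N t‖ ^ 2)
      (hcont.norm.pow 2)]
    refine sum_congr rfl fun n hn => ?_
    rw [splineCost_eq_accel_jerk, ← integral_norm_sq_affine]
    refine integral_congr fun t ht => ?_
    rw [Set.uIcc_of_le (by linarith)] at ht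
    rw [cubicSplineAccel_eq_on_segment hx (mem_range.mp hn) ht]
    rfl

end Spline

section QuadraticMinimization

variable {M P : Type*} [AddCommGroup M] [Module ℝ M] [AddCommGroup P] [Module ℝ P]

open QuadraticMap

lemma QuadraticMap.polar_eq_zero_of_forall_le_add_smul (Q : QuadraticMap ℝ M ℝ) {z h : M}
    (hz : ∀ t : ℝ, Q z ≤ Q (z + t • h)) : polar Q z h = 0 := by
  have hdisc : discrim (Q h) (polar Q z h) 0 ≤ 0 := discrim_le_zero fun t => by
    have := hz t
    rw [QuadraticMap.map_add Q, QuadraticMap.map_smul, polar_smul_right, smul_eq_mul,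
      smul_eq_mul] at this
    linarith
  rw [discrim] at hdisc
  nlinarith [sq_nonneg (polar Q z h)]

/-- A minimizer `v` of `Q (x, ·)` is characterized by the vanishing of the linear form
`polar Q (x, v) (0, ·)`, which is linear in `(x, v)` jointly. -/
theorem QuadraticMap.isLinearMap_of_isMinimizer (Q : QuadraticMap ℝ (M × P) ℝ) (V : M → P)
    (hmin : ∀ x w, Q (x, V x) ≤ Q (x, w))
    (huniq : ∀ x w, (∀ u, Q (x, w) ≤ Q (x, u)) → w = V x) : IsLinearMap ℝ V := by
  have hpolar : ∀ x h, polar Q (x, V x) (0, h) = 0 := fun x h =>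
    Q.polar_eq_zero_of_forall_le_add_smul fun t => by simpa using hmin x (V x + t • h)
  have hnonneg : ∀ h, 0 ≤ Q (0, h) := fun h => by
    have := hmin 0 (V 0 + h)
    rw [show ((0 : M), V 0 + h) = (0, V 0) + (0, h) by simp, QuadraticMap.map_add Q, hpolar] at this
    linarith
  have heq_of_polar : ∀ x v, (∀ h, polar Q (x, v) (0, h) = 0) → V x = v := fun x v hv =>
    (huniq x v fun u => by
      have := QuadraticMap.map_add Q (x, v) (0, u - v)
      rw [hv, show (x, v) + (0, u - v) = (x, u) by simp] at this
      linarith [hnonneg (u - v)]).symm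
  refine ⟨fun x y => heq_of_polar _ _ fun h => ?_, fun c x => heq_of_polar _ _ fun h => ?_⟩
  · rw [← Prod.mk_add_mk, polar_add_left, hpolar, hpolar, add_zero]
  · rw [← Prod.smul_mk, polar_smul_left, hpolar, smul_zero]

end QuadraticMinimization

section PathEnergy

variable {d N : ℕ}

local notation "E" => EuclideanSpace ℝ (Fin d)

def pathEnergy (N : ℕ) (x v : Fin (N + 1) → E) : ℝ :=
  ∑ i : Fin N, splineCost (x i.castSucc) (x i.succ) (v i.castSucc) (v i.succ)

lemma continuous_pathEnergy :
    Continuous fun z : (Fin (N + 1) → E) × (Fin (N + 1) → E) => pathEnergy N z.1 z.2 := by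
  unfold pathEnergy splineCost
  fun_prop

lemma pathEnergy_eq_sum_range (f g : ℕ → E) :
    pathEnergy N (fun i => f i) (fun i => g i) =
      ∑ n ∈ range N, splineCost (f n) (f (n + 1)) (g n) (g (n + 1)) := by
  rw [pathEnergy, ← Fin.sum_univ_eq_sum_range]
  rfl

def segmentSlip (i : Fin N) : (Fin (N + 1) → E) × (Fin (N + 1) → E) →ₗ[ℝ] E where
  toFun z := z.1 i.succ - z.1 i.castSucc - z.2 i.castSucc
  map_add' _ _ := by simp only [Prod.fst_add, Prod.snd_add, Pi.add_apply]; abel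
  map_smul' _ _ := by simp only [Prod.smul_fst, Prod.smul_snd, Pi.smul_apply, smul_sub]; rfl

def segmentVelocityJump (i : Fin N) : (Fin (N + 1) → E) × (Fin (N + 1) → E) →ₗ[ℝ] E where
  toFun z := z.2 i.succ - z.2 i.castSucc
  map_add' _ _ := by simp only [Prod.snd_add, Pi.add_apply]; abel
  map_smul' _ _ := by simp only [Prod.smul_snd, Pi.smul_apply, smul_sub]; rfl

variable (d N) in
def pathEnergyForm : QuadraticForm ℝ ((Fin (N + 1) → E) × (Fin (N + 1) → E)) :=
  LinearMap.BilinMap.toQuadraticMap <| ∑ i : Fin N,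
    ((12 : ℝ) • (innerₗ E).compl₁₂ (segmentSlip i) (segmentSlip i) -
      (12 : ℝ) • (innerₗ E).compl₁₂ (segmentSlip i) (segmentVelocityJump i) +
      (4 : ℝ) • (innerₗ E).compl₁₂ (segmentVelocityJump i) (segmentVelocityJump i))

lemma pathEnergyForm_apply (z : (Fin (N + 1) → E) × (Fin (N + 1) → E)) :
    pathEnergyForm d N z = pathEnergy N z.1 z.2 := by
  simp only [pathEnergyForm, LinearMap.BilinMap.toQuadraticMap_sum,
    LinearMap.BilinMap.toQuadraticMap_add, LinearMap.BilinMap.toQuadraticMap_sub,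
    LinearMap.BilinMap.toQuadraticMap_smul, _root_.sum_apply, _root_.add_apply,
    _root_.sub_apply, _root_.smul_apply, LinearMap.BilinMap.toQuadraticMap_apply,
    LinearMap.compl₁₂_apply, innerₗ_apply_apply, real_inner_self_eq_norm_sq, smul_eq_mul]
  rfl

lemma polar_pathEnergyForm (x v h : Fin (N + 1) → E) :
    QuadraticMap.polar (pathEnergyForm d N) (x, v) (0, h) =
      2 * ∑ i : Fin N,
        (⟪hermiteAccel (x i.castSucc) (x i.succ) (v i.castSucc) (v i.succ) +
            hermiteJerk (x i.castSucc) (x i.succ) (v i.castSucc) (v i.succ), h i.succ⟫ -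
          ⟪hermiteAccel (x i.castSucc) (x i.succ) (v i.castSucc) (v i.succ), h i.castSucc⟫) := by
  rw [QuadraticMap.polar, Prod.mk_add_mk, add_zero, pathEnergyForm_apply, pathEnergyForm_apply,
    pathEnergyForm_apply]
  simp only [pathEnergy, Pi.add_apply, Pi.zero_apply, splineCost_add_velocity, mul_sum,
    sum_add_distrib]
  ring

/-- First-order condition for varying `v` at the single knot `i.succ = j.castSucc` only. -/
lemma hermiteAccel_eq_of_isMinimizer {x v : Fin (N + 1) → E}
    (hv : ∀ w, pathEnergy N x v ≤ pathEnergy N x w) {i j : Fin N} (hij : i.succ = j.castSucc) :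
    hermiteAccel (x j.castSucc) (x j.succ) (v j.castSucc) (v j.succ) =
      hermiteAccel (x i.castSucc) (x i.succ) (v i.castSucc) (v i.succ) +
        hermiteJerk (x i.castSucc) (x i.succ) (v i.castSucc) (v i.succ) := by
  set A := fun l : Fin N => hermiteAccel (x l.castSucc) (x l.succ) (v l.castSucc) (v l.succ)
  set B := fun l : Fin N => hermiteJerk (x l.castSucc) (x l.succ) (v l.castSucc) (v l.succ)
  set u := A i + B i - A j
  set h : Fin (N + 1) → E := Pi.single i.succ u with h_def
  have hpolar := (pathEnergyForm d N).polar_eq_zero_of_forall_le_add_smul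
    (z := (x, v)) (h := (0, h)) fun t => by
      rw [Prod.smul_mk, smul_zero, Prod.mk_add_mk, add_zero, pathEnergyForm_apply,
        pathEnergyForm_apply]
      exact hv _
  have hsucc : ∑ l : Fin N, ⟪A l + B l, h l.succ⟫ = ⟪A i + B i, u⟫ := by
    rw [h_def, Fintype.sum_eq_single i fun l hl => by
      rw [Pi.single_apply, if_neg (Fin.succ_injective _ |>.ne hl), inner_zero_right],
      Pi.single_eq_same]
  have hcast : ∑ l : Fin N, ⟪A l, h l.castSucc⟫ = ⟪A j, u⟫ := by
    rw [h_def, hij, Fintype.sum_eq_single j fun l hl => by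
      rw [Pi.single_apply, if_neg (Fin.castSucc_injective _ |>.ne hl), inner_zero_right],
      Pi.single_eq_same]
  rw [polar_pathEnergyForm, sum_sub_distrib, hsucc, hcast, ← inner_sub_left] at hpolar
  exact (sub_eq_zero.mp (inner_self_eq_zero.mp
    ((mul_eq_zero.mp hpolar).resolve_left two_ne_zero))).symm

end PathEnergy

section MultiCost

variable {d N : ℕ}

lemma Fin.clamp_val (i : Fin (N + 1)) : Fin.clamp i N = i :=
  Fin.ext (by simp [Fin.coe_clamp, i.is_le])

lemma accelMatchesAtKnots_of_isMinimizer {x v : Fin (N + 1) → EuclideanSpace ℝ (Fin d)}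
    (hv : ∀ w, pathEnergy N x v ≤ pathEnergy N x w) :
    AccelMatchesAtKnots (fun n => x (Fin.clamp n N)) (fun n => v (Fin.clamp n N)) N := by
  intro j hj
  have hclamp : ∀ n (hn : n < N + 1), Fin.clamp n N = ⟨n, hn⟩ := fun n hn =>
    Fin.ext (by simp only [Fin.coe_clamp, inf_eq_left]; omega)
  simp only [segmentAccel, segmentJerk, hclamp j (by omega), hclamp (j + 1) (by omega),
    hclamp (j + 1 + 1) (by omega)]
  exact hermiteAccel_eq_of_isMinimizer hv (i := ⟨j, by omega⟩) (j := ⟨j + 1, hj⟩) rfl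

lemma pathEnergy_le_integral {x v : Fin (N + 1) → EuclideanSpace ℝ (Fin d)}
    (hv : ∀ w, pathEnergy N x v ≤ pathEnergy N x w) {X : ℝ → EuclideanSpace ℝ (Fin d)}
    (hX : ContDiff ℝ 2 X) (hXx : ∀ i : Fin (N + 1), X ((i : ℕ) : ℝ) = x i) :
    pathEnergy N x v ≤ ∫ t in (0 : ℝ)..N, ‖deriv (deriv X) t‖ ^ 2 := by
  obtain rfl : x = fun i : Fin (N + 1) => X ((i : ℕ) : ℝ) := funext fun i => (hXx i).symm
  calc pathEnergy N _ v ≤ pathEnergy N (fun i : Fin (N + 1) => X ((i : ℕ) : ℝ))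
        (fun i => deriv X ((i : ℕ) : ℝ)) := hv _
    _ = ∑ n ∈ range N, splineCost (X n) (X (n + 1)) (deriv X n) (deriv X (n + 1)) := by
        rw [pathEnergy_eq_sum_range (fun n : ℕ => X n) (fun n : ℕ => deriv X n)]
        push_cast
        rfl
    _ ≤ _ := sum_splineCost_le_integral hX N

theorem multiCost_eq_pathEnergy {x v : Fin (N + 1) → EuclideanSpace ℝ (Fin d)}
    (hv : ∀ w, pathEnergy N x v ≤ pathEnergy N x w) : multiCost N x = pathEnergy N x v := by
  obtain ⟨S, hS, hSx, hSE⟩ := exists_contDiff_spline (accelMatchesAtKnots_of_isMinimizer hv)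
  refine IsLeast.csInf_eq ⟨⟨S, hS, fun i => ?_, ?_⟩, ?_⟩
  · rw [hSx i i.is_le, Fin.clamp_val]
  · rw [hSE, ← pathEnergy_eq_sum_range]
    simp only [Fin.clamp_val]
  · rintro _ ⟨X, hX, hXx, rfl⟩
    exact pathEnergy_le_integral hv hX hXx

end MultiCost

theorem stmt11_general (d N : ℕ)
    (ρ : Fin (N + 1) → Measure (EuclideanSpace ℝ (Fin d)))
    (V : (Fin (N + 1) → EuclideanSpace ℝ (Fin d)) →
        (Fin (N + 1) → EuclideanSpace ℝ (Fin d)))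
    (hVmin : ∀ x w : Fin (N + 1) → EuclideanSpace ℝ (Fin d),
      (∑ i : Fin N, splineCost (x i.castSucc) (x i.succ) (V x i.castSucc) (V x i.succ)) ≤
        ∑ i : Fin N, splineCost (x i.castSucc) (x i.succ) (w i.castSucc) (w i.succ))
    (hVuniq : ∀ x w : Fin (N + 1) → EuclideanSpace ℝ (Fin d),
      (∀ u : Fin (N + 1) → EuclideanSpace ℝ (Fin d),
        (∑ i : Fin N, splineCost (x i.castSucc) (x i.succ) (w i.castSucc) (w i.succ)) ≤
          ∑ i : Fin N, splineCost (x i.castSucc) (x i.succ) (u i.castSucc) (u i.succ)) →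
      w = V x)
    (π : Measure (Fin (N + 1) → EuclideanSpace ℝ (Fin d)))
    (hπopt : ∀ π' : Measure (Fin (N + 1) → EuclideanSpace ℝ (Fin d)),
      IsProbabilityMeasure π' → (∀ i, π'.map (fun y => y i) = ρ i) →
      (∫⁻ y, ENNReal.ofReal (multiCost N y) ∂π) ≤
        ∫⁻ y, ENNReal.ofReal (multiCost N y) ∂π') :
    ∀ γ' : Measure ((Fin (N + 1) → EuclideanSpace ℝ (Fin d)) ×
        (Fin (N + 1) → EuclideanSpace ℝ (Fin d))),
      IsProbabilityMeasure γ' → (∀ i, γ'.map (fun p => p.1 i) = ρ i) →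
      (∫⁻ p, ENNReal.ofReal (∑ i : Fin N,
          splineCost (p.1 i.castSucc) (p.1 i.succ) (p.2 i.castSucc) (p.2 i.succ))
        ∂(π.map (fun x => (x, V x)))) ≤
        ∫⁻ p, ENNReal.ofReal (∑ i : Fin N,
          splineCost (p.1 i.castSucc) (p.1 i.succ) (p.2 i.castSucc) (p.2 i.succ)) ∂γ' := by
  intro γ hγ hγρ
  have hVlin : IsLinearMap ℝ V := (pathEnergyForm d N).isLinearMap_of_isMinimizer V
    (fun x w => by rw [pathEnergyForm_apply, pathEnergyForm_apply]; exact hVmin x w)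
    (fun x w hw => hVuniq x w fun u => by
      have := hw u
      rwa [pathEnergyForm_apply, pathEnergyForm_apply] at this)
  have hV : Measurable V := (IsLinearMap.mk' V hVlin).continuous_of_finiteDimensional.measurable
  have hcost : ∀ x, multiCost N x = pathEnergy N x (V x) := fun x =>
    multiCost_eq_pathEnergy (hVmin x)
  change ∫⁻ p, ENNReal.ofReal (pathEnergy N p.1 p.2) ∂(π.map fun x => (x, V x)) ≤
    ∫⁻ p, ENNReal.ofReal (pathEnergy N p.1 p.2) ∂γ
  calc ∫⁻ p, ENNReal.ofReal (pathEnergy N p.1 p.2) ∂(π.map fun x => (x, V x))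
      = ∫⁻ x, ENNReal.ofReal (multiCost N x) ∂π := by
        rw [lintegral_map continuous_pathEnergy.measurable.ennreal_ofReal
          (measurable_id'.prodMk hV)]
        simp only [hcost]
    _ ≤ ∫⁻ x, ENNReal.ofReal (multiCost N x) ∂(γ.map Prod.fst) :=
        hπopt _ (Measure.isProbabilityMeasure_map measurable_fst.aemeasurable) fun i => by
          rw [Measure.map_map (measurable_pi_apply i) measurable_fst]
          exact hγρ i
    _ ≤ ∫⁻ p, ENNReal.ofReal (multiCost N p.1) ∂γ := lintegral_map_le _ _
    _ ≤ ∫⁻ p, ENNReal.ofReal (pathEnergy N p.1 p.2) ∂γ := lintegral_mono fun p =>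
        ENNReal.ofReal_le_ofReal ((hcost p.1).trans_le (hVmin p.1 p.2))

/-- If `𝕍(x)` denotes the unique minimizer of
`(v₀,…,v_N) ↦ Σ_i c(x_i,x_{i+1},v_i,v_{i+1})` and `π̂` minimizes `∫ 𝒞 dπ` over
`Π(ρ₀,…,ρ_N)`, then `γ̂ = (id, 𝕍)_#π̂` minimizes the phase-space multimarginal
problem over `Γ(ρ₀,…,ρ_N)`. -/
theorem stmt11 (d N : ℕ) (hd : 1 ≤ d) (hN : 1 ≤ N)
    (ρ : Fin (N + 1) → Measure (EuclideanSpace ℝ (Fin d)))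
    (hprob : ∀ i, IsProbabilityMeasure (ρ i))
    (hmom : ∀ i, (∫⁻ z, ENNReal.ofReal (‖z‖ ^ 2) ∂(ρ i)) < ⊤)
    (V : (Fin (N + 1) → EuclideanSpace ℝ (Fin d)) →
        (Fin (N + 1) → EuclideanSpace ℝ (Fin d)))
    (hVmin : ∀ x w : Fin (N + 1) → EuclideanSpace ℝ (Fin d),
      (∑ i : Fin N, splineCost (x i.castSucc) (x i.succ) (V x i.castSucc) (V x i.succ)) ≤
        ∑ i : Fin N, splineCost (x i.castSucc) (x i.succ) (w i.castSucc) (w i.succ))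
    (hVuniq : ∀ x w : Fin (N + 1) → EuclideanSpace ℝ (Fin d),
      (∀ u : Fin (N + 1) → EuclideanSpace ℝ (Fin d),
        (∑ i : Fin N, splineCost (x i.castSucc) (x i.succ) (w i.castSucc) (w i.succ)) ≤
          ∑ i : Fin N, splineCost (x i.castSucc) (x i.succ) (u i.castSucc) (u i.succ)) →
      w = V x)
    (π : Measure (Fin (N + 1) → EuclideanSpace ℝ (Fin d)))
    (hπ : IsProbabilityMeasure π) (hπm : ∀ i, π.map (fun y => y i) = ρ i)
    (hπopt : ∀ π' : Measure (Fin (N + 1) → EuclideanSpace ℝ (Fin d)),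
      IsProbabilityMeasure π' → (∀ i, π'.map (fun y => y i) = ρ i) →
      (∫⁻ y, ENNReal.ofReal (multiCost N y) ∂π) ≤
        ∫⁻ y, ENNReal.ofReal (multiCost N y) ∂π') :
    ∀ γ' : Measure ((Fin (N + 1) → EuclideanSpace ℝ (Fin d)) ×
        (Fin (N + 1) → EuclideanSpace ℝ (Fin d))),
      IsProbabilityMeasure γ' → (∀ i, γ'.map (fun p => p.1 i) = ρ i) →
      (∫⁻ p, ENNReal.ofReal (∑ i : Fin N,
          splineCost (p.1 i.castSucc) (p.1 i.succ) (p.2 i.castSucc) (p.2 i.succ))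
        ∂(π.map (fun x => (x, V x)))) ≤
        ∫⁻ p, ENNReal.ofReal (∑ i : Fin N,
          splineCost (p.1 i.castSucc) (p.1 i.succ) (p.2 i.castSucc) (p.2 i.succ)) ∂γ' :=
  stmt11_general d N ρ V hVmin hVuniq π hπopt
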